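/- The set S̲ of unit dual quaternions, with the subspace topology of ℝ⁸, is homeomorphic to the product 𝒮³ × ℝ³, where 𝒮³ is the unit sphere in ℝ⁴. -/

import Mathlib

noncomputable section

/-- Dual quaternions: elements `q_r + ε q_d` with `q_r, q_d` real quaternions, `ε² = 0`. -/
abbrev DQ : Type := DualNumber (Quaternion ℝ)

/-- A unit dual quaternion: `‖q_r‖ = 1` and `q_r q_d* + q_d q_r* = 0`. -/
def isUnitDQ (q : DQ) : Prop :=
  ‖q.fst‖ = 1 ∧ q.fst * star q.snd + q.snd * star q.fst = 0

/-- The identification `vec(q) = (η,μ₁,μ₂,μ₃,η',μ₁',μ₂',μ₃')` of a dual quaternion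
with a point of `ℝ⁸`. -/
def dvec (q : DQ) : Fin 8 → ℝ :=
  ![q.fst.re, q.fst.imI, q.fst.imJ, q.fst.imK, q.snd.re, q.snd.imI, q.snd.imJ, q.snd.imK]

/-- The set `S̲ ⊆ ℝ⁸` of unit dual quaternions, with the subspace topology of `ℝ⁸`. -/
def Sset : Set (Fin 8 → ℝ) := dvec '' {q : DQ | isUnitDQ q}

namespace UDQAux

open Quaternion TrivSqZeroExt

/-- Build a quaternion from four real numbers. -/
def qmk (a b c d : ℝ) : Quaternion ℝ := ⟨a, b, c, d⟩

/-- Building a quaternion from continuous components is continuous. -/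
lemma continuous_qmk {X : Type*} [TopologicalSpace X] {a b c d : X → ℝ}
    (ha : Continuous a) (hb : Continuous b) (hc : Continuous c) (hd : Continuous d) :
    Continuous fun x => qmk (a x) (b x) (c x) (d x) := by
  have h : Continuous fun x =>
      ((WithLp.equiv 2 (Fin 4 → ℝ)).symm ![a x, b x, c x, d x]) := by
    refine (PiLp.continuous_toLp 2 fun _ : Fin 4 => ℝ).comp ?_
    refine continuous_pi fun i => ?_
    fin_cases i <;> simpa
  exact Quaternion.linearIsometryEquivTuple.symm.continuous.comp h

lemma continuous_star_quat : Continuous (star : Quaternion ℝ → Quaternion ℝ) := by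
  have h : (star : Quaternion ℝ → Quaternion ℝ) =
      fun a => (((2 * a.re : ℝ) : Quaternion ℝ) - a) := by
    funext a
    rw [eq_sub_iff_add_eq, add_comm, Quaternion.self_add_star']
  rw [h]
  refine Continuous.sub ?_ continuous_id
  exact Quaternion.continuous_coe.comp (continuous_const.mul Quaternion.continuous_re)

/-- `dvec` as a homeomorphism. -/
def e8 : DQ ≃ₜ (Fin 8 → ℝ) where
  toFun := dvec
  invFun v := (qmk (v 0) (v 1) (v 2) (v 3), qmk (v 4) (v 5) (v 6) (v 7))
  left_inv q := rfl
  right_inv v := by funext i; fin_cases i <;> rfl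
  continuous_toFun := by
    refine continuous_pi fun i => ?_
    fin_cases i
    · exact Quaternion.continuous_re.comp TrivSqZeroExt.continuous_fst
    · exact Quaternion.continuous_imI.comp TrivSqZeroExt.continuous_fst
    · exact Quaternion.continuous_imJ.comp TrivSqZeroExt.continuous_fst
    · exact Quaternion.continuous_imK.comp TrivSqZeroExt.continuous_fst
    · exact Quaternion.continuous_re.comp TrivSqZeroExt.continuous_snd
    · exact Quaternion.continuous_imI.comp TrivSqZeroExt.continuous_snd
    · exact Quaternion.continuous_imJ.comp TrivSqZeroExt.continuous_snd
    · exact Quaternion.continuous_imK.comp TrivSqZeroExt.continuous_snd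
  continuous_invFun := by
    refine Continuous.prodMk ?_ ?_
    · exact continuous_qmk (continuous_apply 0) (continuous_apply 1)
        (continuous_apply 2) (continuous_apply 3)
    · exact continuous_qmk (continuous_apply 4) (continuous_apply 5)
        (continuous_apply 6) (continuous_apply 7)

lemma re_zero_of_unit {q : DQ} (h : isUnitDQ q) : (q.snd * star q.fst).re = 0 := by
  have h1 : star (q.snd * star q.fst) + (q.snd * star q.fst) = 0 := by
    rw [star_mul, star_star]; exact h.2
  have h2 := congrArg QuaternionAlgebra.re h1
  simp only [Quaternion.re_add, Quaternion.re_star, Quaternion.re_zero] at h2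
  linarith

lemma star_mul_self_one {r : Quaternion ℝ} (hr : ‖r‖ = 1) : star r * r = 1 := by
  rw [Quaternion.star_mul_self, Quaternion.normSq_eq_norm_mul_self, hr]
  norm_num

lemma self_mul_star_one {r : Quaternion ℝ} (hr : ‖r‖ = 1) : r * star r = 1 := by
  rw [Quaternion.self_mul_star, Quaternion.normSq_eq_norm_mul_self, hr]
  norm_num

/-- The key homeomorphism: unit dual quaternions to sphere × pure quaternions. -/
def eU : {q : DQ // isUnitDQ q} ≃ₜ
    (Metric.sphere (0 : Quaternion ℝ) 1 × {p : Quaternion ℝ // p.re = 0}) where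
  toFun q := (⟨q.1.fst, by simpa [mem_sphere_zero_iff_norm] using q.2.1⟩,
    ⟨q.1.snd * star q.1.fst, re_zero_of_unit q.2⟩)
  invFun rp := ⟨(rp.1.1, rp.2.1 * rp.1.1), by
    have hr : ‖(rp.1.1 : Quaternion ℝ)‖ = 1 := by
      simpa [mem_sphere_zero_iff_norm] using rp.1.2
    have hp : (rp.2.1 : Quaternion ℝ).re = 0 := rp.2.2
    refine ⟨hr, ?_⟩
    show rp.1.1 * star (rp.2.1 * rp.1.1) + (rp.2.1 * rp.1.1) * star rp.1.1 = 0
    rw [star_mul, ← mul_assoc, mul_assoc rp.2.1, self_mul_star_one hr, one_mul,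
      mul_one, Quaternion.star_add_self, hp]
    simp⟩
  left_inv q := by
    apply Subtype.ext
    have h1 : star q.1.fst * q.1.fst = 1 := star_mul_self_one q.2.1
    show ((q.1.fst, q.1.snd * star q.1.fst * q.1.fst) : DQ) = q.1
    rw [mul_assoc, h1, mul_one]
    rfl
  right_inv rp := by
    have hr : ‖(rp.1.1 : Quaternion ℝ)‖ = 1 := by
      simpa [mem_sphere_zero_iff_norm] using rp.1.2
    refine Prod.ext (Subtype.ext rfl) (Subtype.ext ?_)
    show rp.2.1 * rp.1.1 * star rp.1.1 = rp.2.1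
    rw [mul_assoc, self_mul_star_one hr, mul_one]
  continuous_toFun := by
    refine Continuous.prodMk (Continuous.subtype_mk ?_ _) (Continuous.subtype_mk ?_ _)
    · exact TrivSqZeroExt.continuous_fst.comp continuous_subtype_val
    · exact (TrivSqZeroExt.continuous_snd.comp continuous_subtype_val).mul
        (continuous_star_quat.comp (TrivSqZeroExt.continuous_fst.comp continuous_subtype_val))
  continuous_invFun := by
    refine Continuous.subtype_mk (Continuous.prodMk ?_ ?_) _
    · exact continuous_subtype_val.comp _root_.continuous_fst
    · exact (continuous_subtype_val.comp _root_.continuous_snd).mul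
        (continuous_subtype_val.comp _root_.continuous_fst)

/-- Sphere of quaternions homeomorphic to the sphere in `EuclideanSpace ℝ (Fin 4)`. -/
def eSphere : ↥(Metric.sphere (0 : Quaternion ℝ) 1) ≃ₜ
    ↥(Metric.sphere (0 : EuclideanSpace ℝ (Fin 4)) 1) :=
  Homeomorph.subtype Quaternion.linearIsometryEquivTuple.toHomeomorph (fun x => by
    simp only [mem_sphere_zero_iff_norm, LinearIsometryEquiv.coe_toHomeomorph,
      LinearIsometryEquiv.norm_map])

/-- Pure imaginary quaternions homeomorphic to `EuclideanSpace ℝ (Fin 3)`. -/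
def eP : {p : Quaternion ℝ // p.re = 0} ≃ₜ EuclideanSpace ℝ (Fin 3) where
  toFun p := (WithLp.equiv 2 (Fin 3 → ℝ)).symm ![p.1.imI, p.1.imJ, p.1.imK]
  invFun v := ⟨qmk 0 (WithLp.equiv 2 (Fin 3 → ℝ) v 0) (WithLp.equiv 2 (Fin 3 → ℝ) v 1)
    (WithLp.equiv 2 (Fin 3 → ℝ) v 2), rfl⟩
  left_inv p := by
    apply Subtype.ext
    refine QuaternionAlgebra.ext ?_ rfl rfl rfl
    exact p.2.symm
  right_inv v := by
    apply (WithLp.equiv 2 (Fin 3 → ℝ)).injective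
    funext i
    fin_cases i <;> rfl
  continuous_toFun := by
    refine (PiLp.continuous_toLp 2 fun _ : Fin 3 => ℝ).comp ?_
    refine continuous_pi fun i => ?_
    fin_cases i
    · exact Quaternion.continuous_imI.comp continuous_subtype_val
    · exact Quaternion.continuous_imJ.comp continuous_subtype_val
    · exact Quaternion.continuous_imK.comp continuous_subtype_val
  continuous_invFun := by
    refine Continuous.subtype_mk ?_ _
    refine continuous_qmk continuous_const ?_ ?_ ?_ <;>
      exact (continuous_apply _).comp (PiLp.continuous_ofLp 2 fun _ : Fin 3 => ℝ)

end UDQAux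

/-- The set of unit dual quaternions is homeomorphic to `𝒮³ × ℝ³`, where `𝒮³` is the
unit sphere in `ℝ⁴`. -/
theorem unitDualQuaternions_homeomorph_sphere_prod :
    Nonempty (↥Sset ≃ₜ
      (↥(Metric.sphere (0 : EuclideanSpace ℝ (Fin 4)) 1) × EuclideanSpace ℝ (Fin 3))) := by
  refine ⟨?_⟩
  have h1 : ↥Sset ≃ₜ {q : DQ // isUnitDQ q} :=
    (UDQAux.e8.image {q : DQ | isUnitDQ q}).symm
  exact h1.trans (UDQAux.eU.trans (UDQAux.eSphere.prodCongr UDQAux.eP))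

end
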